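/- Let r₀ > 0 and p > 0. There is no twice continuously differentiable function ψ : [r₀,∞) → (0,∞) satisfying ψ″(r) + (1/r)·ψ′(r) + (1/2)·ψ(r)^{p} ≤ 0 for every r ≥ r₀. -/

import Mathlib

/-!
Put `h(r) = r ψ'(r)`. Multiplying the inequality by `r` gives `h' = r ψ'' + ψ' ≤ -(r/2) ψ^p < 0`,
so `h` is decreasing. If `h(r₁) = c < 0` for some `r₁`, then `ψ' ≤ c / r` beyond `r₁`, and `ψ`
falls below `ψ(r₁) + c log (r / r₁) → -∞`, contradicting `ψ > 0`. Otherwise `ψ' ≥ 0`, so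
`ψ ≥ ψ(r₀)` and `h' ≤ -(ψ(r₀)^p / 2) r`, which forces `h → -∞`, contradicting `h ≥ 0`.
-/

open Filter Set

section DerivativeComparison

variable {f f' g g' : ℝ → ℝ} {a : ℝ}

lemma antitoneOn_Ici_of_hasDerivAt_nonpos (hf : ∀ x, a ≤ x → HasDerivAt f (f' x) x)
    (hf' : ∀ x, a ≤ x → f' x ≤ 0) : AntitoneOn f (Ici a) := by
  refine antitoneOn_of_hasDerivWithinAt_nonpos (f' := f') (convex_Ici a)
    (fun x hx => (hf x hx).continuousAt.continuousWithinAt) (fun x hx => ?_) (fun x hx => ?_)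
  all_goals rw [interior_Ici] at hx
  · exact (hf x hx.le).hasDerivWithinAt
  · exact hf' x hx.le

lemma monotoneOn_Ici_of_hasDerivAt_nonneg (hf : ∀ x, a ≤ x → HasDerivAt f (f' x) x)
    (hf' : ∀ x, a ≤ x → 0 ≤ f' x) : MonotoneOn f (Ici a) := fun _ hx _ hy hxy =>
  neg_le_neg_iff.1 <| antitoneOn_Ici_of_hasDerivAt_nonpos (fun x hx => (hf x hx).neg)
    (fun x hx => neg_nonpos.2 (hf' x hx)) hx hy hxy

lemma tendsto_atBot_of_hasDerivAt_le (hf : ∀ x, a ≤ x → HasDerivAt f (f' x) x)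
    (hg : ∀ x, a ≤ x → HasDerivAt g (g' x) x) (hle : ∀ x, a ≤ x → f' x ≤ g' x)
    (hg_lim : Tendsto g atTop atBot) : Tendsto f atTop atBot := by
  have hanti : AntitoneOn (fun x => f x - g x) (Ici a) :=
    antitoneOn_Ici_of_hasDerivAt_nonpos (fun x hx => (hf x hx).sub (hg x hx))
      (fun x hx => sub_nonpos.2 (hle x hx))
  refine tendsto_atBot_mono' _ ?_ (tendsto_atBot_add_const_right _ (f a - g a) hg_lim)
  filter_upwards [eventually_ge_atTop a] with x hx
  linarith [hanti self_mem_Ici hx hx]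

lemma not_tendsto_atBot_of_nonneg_on_Ici (hf : ∀ x, a ≤ x → 0 ≤ f x) :
    ¬ Tendsto f atTop atBot := fun hlim =>
  let ⟨x, hneg, hx⟩ :=
    ((hlim.eventually (eventually_lt_atBot 0)).and (eventually_ge_atTop a)).exists
  (hf x hx).not_gt hneg

lemma tendsto_atBot_of_mul_deriv_le_neg {c : ℝ} (ha : 0 < a)
    (hf : ∀ x, a ≤ x → HasDerivAt f (f' x) x) (hc : c < 0) (hle : ∀ x, a ≤ x → x * f' x ≤ c) :
    Tendsto f atTop atBot := by
  refine tendsto_atBot_of_hasDerivAt_le hf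
    (fun x hx => (Real.hasDerivAt_log (ha.trans_le hx).ne').const_mul c) (fun x hx => ?_)
    (Real.tendsto_log_atTop.const_mul_atTop_of_neg hc)
  rw [← div_eq_mul_inv, le_div_iff₀ (ha.trans_le hx), mul_comm]
  exact hle x hx

lemma tendsto_atBot_of_deriv_le_neg_mul {k : ℝ} (hf : ∀ x, a ≤ x → HasDerivAt f (f' x) x)
    (hk : 0 < k) (hle : ∀ x, a ≤ x → f' x ≤ -(k * x)) : Tendsto f atTop atBot := by
  refine tendsto_atBot_of_hasDerivAt_le hf
    (fun x _ => ((hasDerivAt_pow 2 x).const_mul (-(k / 2)))) (fun x hx => ?_)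
    ((tendsto_pow_atTop two_ne_zero).const_mul_atTop_of_neg (by linarith))
  linarith [hle x hx]

end DerivativeComparison

/-- Exterior nonexistence in dimension two: there is no positive `C²` function `ψ` on
`[r₀,∞)` satisfying `ψ'' + (1/r) ψ' + (1/2) ψ^p ≤ 0` (for any `p > 0`). -/
theorem exterior_nonexistence_dim_two
    (r₀ p : ℝ) (hr₀ : 0 < r₀) (hp : 0 < p) :
    ¬ ∃ ψ ψ' ψ'' : ℝ → ℝ,
        (∀ r : ℝ, r₀ ≤ r → HasDerivAt ψ (ψ' r) r) ∧
        (∀ r : ℝ, r₀ ≤ r → HasDerivAt ψ' (ψ'' r) r) ∧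
        ContinuousOn ψ'' (Set.Ici r₀) ∧
        (∀ r : ℝ, r₀ ≤ r → 0 < ψ r) ∧
        (∀ r : ℝ, r₀ ≤ r → ψ'' r + (1/r) * ψ' r + (1/2) * ψ r ^ p ≤ 0) := by
  rintro ⟨ψ, ψ', ψ'', hψ, hψ', -, hpos, hineq⟩
  have hflux : ∀ r, r₀ ≤ r → HasDerivAt (fun s => s * ψ' s) (1 * ψ' r + r * ψ'' r) r :=
    fun r hr => (hasDerivAt_id r).mul (hψ' r hr)
  have hflux_le : ∀ r, r₀ ≤ r → 1 * ψ' r + r * ψ'' r ≤ -(r / 2 * ψ r ^ p) := fun r hr => by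
    have hr_pos : 0 < r := hr₀.trans_le hr
    have := mul_le_mul_of_nonneg_left (hineq r hr) hr_pos.le
    rw [mul_add, mul_add, ← mul_assoc r (1 / r), mul_one_div_cancel hr_pos.ne'] at this
    linarith
  have hpow_nonneg : ∀ r, r₀ ≤ r → 0 ≤ ψ r ^ p := fun r hr => Real.rpow_nonneg (hpos r hr).le p
  by_cases hneg : ∃ r₁, r₀ ≤ r₁ ∧ r₁ * ψ' r₁ < 0
  · obtain ⟨r₁, hr₁, hc⟩ := hneg
    have hanti := antitoneOn_Ici_of_hasDerivAt_nonpos hflux fun r hr => by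
      nlinarith [hflux_le r hr, hpow_nonneg r hr]
    exact not_tendsto_atBot_of_nonneg_on_Ici (fun r hr => (hpos r (hr₁.trans hr)).le)
      (tendsto_atBot_of_mul_deriv_le_neg (hr₀.trans_le hr₁) (fun r hr => hψ r (hr₁.trans hr)) hc
        fun r hr => hanti hr₁ (hr₁.trans hr) hr)
  · push Not at hneg
    have hψ'_nonneg : ∀ r, r₀ ≤ r → 0 ≤ ψ' r := fun r hr =>
      nonneg_of_mul_nonneg_right (hneg r hr) (hr₀.trans_le hr)
    have hψ_mono := monotoneOn_Ici_of_hasDerivAt_nonneg hψ hψ'_nonneg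
    have hK : 0 < ψ r₀ ^ p := Real.rpow_pos_of_pos (hpos r₀ le_rfl) p
    refine not_tendsto_atBot_of_nonneg_on_Ici hneg
      (tendsto_atBot_of_deriv_le_neg_mul hflux (half_pos hK) fun r hr => ?_)
    have hψ_pow : ψ r₀ ^ p ≤ ψ r ^ p :=
      Real.rpow_le_rpow (hpos r₀ le_rfl).le (hψ_mono self_mem_Ici hr hr) hp.le
    nlinarith [hflux_le r hr, hr₀.trans_le hr]
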